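/- arXiv:1709.04236 — 5 statements merged into one kernel-verified Lean document; each statement's English description precedes it below -/
import Mathlib

section
/- Minimal extrapolation: T is the smallest subset S of ℝ^m × ℝ^s that (i) contains (X_j, Y_j) for every j = 1, …, n, (ii) is convex, and (iii) satisfies free disposability within the nonnegative output orthant, i.e., if (X, Y) ∈ S, X' ≥ X componentwise and 0 ≤ Y' ≤ Y componentwise, then (X', Y') ∈ S. That is, T satisfies (i)–(iii) and T ⊆ S for every set S satisfying (i)–(iii). -/
open Finset

/-- The variable-returns-to-scale (VRS) production possibility set generated by
DMUs with input vectors `X j` and output vectors `Y j`. -/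
def VRS {m s n : ℕ} (X : Fin n → Fin m → ℝ) (Y : Fin n → Fin s → ℝ) :
    Set ((Fin m → ℝ) × (Fin s → ℝ)) :=
  {p | (∀ r, 0 ≤ p.2 r) ∧ ∃ lam : Fin n → ℝ, (∀ j, 0 ≤ lam j) ∧ ∑ j, lam j = 1 ∧
    (∀ i, ∑ j, lam j * X j i ≤ p.1 i) ∧ (∀ r, p.2 r ≤ ∑ j, lam j * Y j r)}

/-- `q` dominates `p`: smaller (or equal) inputs and larger (or equal) outputs. -/
def Dominates {m s : ℕ} (q p : (Fin m → ℝ) × (Fin s → ℝ)) : Prop :=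
  (∀ i, q.1 i ≤ p.1 i) ∧ (∀ r, p.2 r ≤ q.2 r)

/-- `p` is Pareto-efficient in `T`. -/
def ParetoEff {m s : ℕ} (T : Set ((Fin m → ℝ) × (Fin s → ℝ)))
    (p : (Fin m → ℝ) × (Fin s → ℝ)) : Prop :=
  p ∈ T ∧ ¬ ∃ q ∈ T, Dominates q p ∧ q ≠ p

/-- Minimal extrapolation: T is the smallest set containing all observed DMUs that is
convex and satisfies free disposability within the nonnegative output orthant. -/
theorem vrs_minimal_extrapolation (m s n : ℕ)
    (X : Fin n → Fin m → ℝ) (Y : Fin n → Fin s → ℝ)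
    (hX : ∀ j i, 0 ≤ X j i) (hXne : ∀ j, X j ≠ 0)
    (hY : ∀ j r, 0 ≤ Y j r) (hYne : ∀ j, Y j ≠ 0) :
    ((∀ j : Fin n, (X j, Y j) ∈ VRS X Y) ∧ Convex ℝ (VRS X Y) ∧
      (∀ p ∈ VRS X Y, ∀ X' : Fin m → ℝ, ∀ Y' : Fin s → ℝ,
        (∀ i, p.1 i ≤ X' i) → (∀ r, 0 ≤ Y' r) → (∀ r, Y' r ≤ p.2 r) →
          (X', Y') ∈ VRS X Y)) ∧
    (∀ S : Set ((Fin m → ℝ) × (Fin s → ℝ)),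
      (∀ j : Fin n, (X j, Y j) ∈ S) → Convex ℝ S →
      (∀ p ∈ S, ∀ X' : Fin m → ℝ, ∀ Y' : Fin s → ℝ,
        (∀ i, p.1 i ≤ X' i) → (∀ r, 0 ≤ Y' r) → (∀ r, Y' r ≤ p.2 r) → (X', Y') ∈ S) →
      VRS X Y ⊆ S) := by
  constructor
  · refine ⟨?_, ?_, ?_⟩
    · intro j
      refine ⟨fun r => hY j r, fun k => if k = j then 1 else 0, ?_, ?_, ?_, ?_⟩
      · intro k; dsimp only; split <;> norm_num
      · simp
      · intro i; simp [ite_mul, hX]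
      · intro r; simp [ite_mul]
    · rintro p ⟨hp0, lp, hlp0, hlp1, hlpX, hlpY⟩ q ⟨hq0, lq, hlq0, hlq1, hlqX, hlqY⟩
        a b ha hb hab
      refine ⟨fun r => add_nonneg (mul_nonneg ha (hp0 r)) (mul_nonneg hb (hq0 r)),
        fun k => a * lp k + b * lq k, ?_, ?_, ?_, ?_⟩
      · intro k; exact add_nonneg (mul_nonneg ha (hlp0 k)) (mul_nonneg hb (hlq0 k))
      · simp [Finset.sum_add_distrib, ← Finset.mul_sum, hlp1, hlq1, hab]
      · intro i
        have : ∑ j, (a * lp j + b * lq j) * X j i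
            = a * ∑ j, lp j * X j i + b * ∑ j, lq j * X j i := by
          simp [Finset.sum_add_distrib, Finset.mul_sum, mul_assoc, add_mul]
        rw [this]
        have := add_le_add (mul_le_mul_of_nonneg_left (hlpX i) ha)
          (mul_le_mul_of_nonneg_left (hlqX i) hb)
        simpa using this
      · intro r
        have : ∑ j, (a * lp j + b * lq j) * Y j r
            = a * ∑ j, lp j * Y j r + b * ∑ j, lq j * Y j r := by
          simp [Finset.sum_add_distrib, Finset.mul_sum, mul_assoc, add_mul]
        rw [this]
        have := add_le_add (mul_le_mul_of_nonneg_left (hlpY r) ha)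
          (mul_le_mul_of_nonneg_left (hlqY r) hb)
        simpa using this
    · rintro p ⟨hp0, lp, hlp0, hlp1, hlpX, hlpY⟩ X' Y' hX' hY'0 hY'
      exact ⟨hY'0, lp, hlp0, hlp1, fun i => le_trans (hlpX i) (hX' i),
        fun r => le_trans (hY' r) (hlpY r)⟩
  · rintro S hSmem hSconv hSfree p ⟨hp0, lp, hlp0, hlp1, hlpX, hlpY⟩
    have hcomb : (∑ j, lp j • (X j, Y j)) ∈ S :=
      hSconv.sum_mem (fun j _ => hlp0 j) (by simpa using hlp1) (fun j _ => hSmem j)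
    have h1 : (∑ j, lp j • (X j, Y j)).1 = fun i => ∑ j, lp j * X j i := by
      funext i; simp [Prod.fst_sum]
    have h2 : (∑ j, lp j • (X j, Y j)).2 = fun r => ∑ j, lp j * Y j r := by
      funext r; simp [Prod.snd_sum]
    have := hSfree _ hcomb p.1 p.2 (by rw [h1]; exact hlpX) hp0 (by rw [h2]; exact hlpY)
    simpa using this
end

section
/- Sufficiency of a strictly positive supporting hyperplane for Pareto efficiency: let (X̂, Ŷ) ∈ T and suppose there exist v ∈ ℝ^m with all components strictly positive, u ∈ ℝ^s with all components strictly positive, and u₀ ∈ ℝ such that −v·X_j + u·Y_j + u₀ ≤ 0 for every j = 1, …, n, and −v·X̂ + u·Ŷ + u₀ = 0. Then (X̂, Ŷ) is Pareto-efficient in T. -/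
open Finset

/-- Sufficiency of a strictly positive supporting hyperplane for Pareto efficiency. -/
theorem vrs_supporting_hyperplane_sufficient (m s n : ℕ)
    (X : Fin n → Fin m → ℝ) (Y : Fin n → Fin s → ℝ)
    (hX : ∀ j i, 0 ≤ X j i) (hXne : ∀ j, X j ≠ 0)
    (hY : ∀ j r, 0 ≤ Y j r) (hYne : ∀ j, Y j ≠ 0)
    (p : (Fin m → ℝ) × (Fin s → ℝ)) (hp : p ∈ VRS X Y)
    (v : Fin m → ℝ) (u : Fin s → ℝ) (u₀ : ℝ)
    (hv : ∀ i, 0 < v i) (hu : ∀ r, 0 < u r)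
    (hsupport : ∀ j, -(∑ i, v i * X j i) + (∑ r, u r * Y j r) + u₀ ≤ 0)
    (hbinding : -(∑ i, v i * p.1 i) + (∑ r, u r * p.2 r) + u₀ = 0) :
    ParetoEff (VRS X Y) p := by
  constructor
  · exact hp
  · rintro ⟨q, hq, ⟨hdom1, hdom2⟩, hne⟩
    -- the hyperplane value at any point of VRS is ≤ 0
    have key : ∀ z ∈ VRS X Y,
        -(∑ i, v i * z.1 i) + (∑ r, u r * z.2 r) + u₀ ≤ 0 := by
      rintro z ⟨_, lam, hlam0, hlam1, hzx, hzy⟩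
      have h1 : ∑ j, lam j * (∑ i, v i * X j i) ≤ ∑ i, v i * z.1 i := by
        calc ∑ j, lam j * (∑ i, v i * X j i)
            = ∑ i, v i * (∑ j, lam j * X j i) := by
              simp_rw [Finset.mul_sum]
              rw [Finset.sum_comm]
              exact Finset.sum_congr rfl fun i _ => Finset.sum_congr rfl fun j _ => by ring
          _ ≤ ∑ i, v i * z.1 i := by
              apply Finset.sum_le_sum; intro i _
              exact mul_le_mul_of_nonneg_left (hzx i) (hv i).le
      have h2 : ∑ r, u r * z.2 r ≤ ∑ j, lam j * (∑ r, u r * Y j r) := by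
        calc ∑ r, u r * z.2 r
            ≤ ∑ r, u r * (∑ j, lam j * Y j r) := by
              apply Finset.sum_le_sum; intro r _
              exact mul_le_mul_of_nonneg_left (hzy r) (hu r).le
          _ = ∑ j, lam j * (∑ r, u r * Y j r) := by
              simp_rw [Finset.mul_sum]
              rw [Finset.sum_comm]
              exact Finset.sum_congr rfl fun r _ => Finset.sum_congr rfl fun j _ => by ring
      have h3 : ∑ j, lam j * (-(∑ i, v i * X j i) + (∑ r, u r * Y j r) + u₀) ≤ 0 := by
        apply Finset.sum_nonpos; intro j _
        exact mul_nonpos_of_nonneg_of_nonpos (hlam0 j) (hsupport j)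
      have h4 : ∑ j, lam j * (-(∑ i, v i * X j i) + (∑ r, u r * Y j r) + u₀)
          = -(∑ j, lam j * (∑ i, v i * X j i)) + (∑ j, lam j * (∑ r, u r * Y j r)) + u₀ := by
        simp only [mul_add, mul_neg]
        rw [Finset.sum_add_distrib, Finset.sum_add_distrib, ← Finset.sum_mul, hlam1, one_mul,
          Finset.sum_neg_distrib]
      linarith
    have hq0 := key q hq
    -- strict inequality from domination and q ≠ p
    have hvq : ∑ i, v i * q.1 i ≤ ∑ i, v i * p.1 i :=
      Finset.sum_le_sum fun i _ => mul_le_mul_of_nonneg_left (hdom1 i) (hv i).le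
    have huq : ∑ r, u r * p.2 r ≤ ∑ r, u r * q.2 r :=
      Finset.sum_le_sum fun r _ => mul_le_mul_of_nonneg_left (hdom2 r) (hu r).le
    have hstrict : -(∑ i, v i * p.1 i) + (∑ r, u r * p.2 r)
        < -(∑ i, v i * q.1 i) + (∑ r, u r * q.2 r) := by
      have h : ¬(q.1 = p.1 ∧ q.2 = p.2) := fun ⟨a, b⟩ => hne (Prod.ext a b)
      by_cases h1 : q.1 = p.1
      · have h2 : q.2 ≠ p.2 := fun h2 => h ⟨h1, h2⟩
        obtain ⟨r, hr⟩ := Function.ne_iff.mp h2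
        have : ∑ r, u r * p.2 r < ∑ r, u r * q.2 r := by
          apply Finset.sum_lt_sum
          · exact fun r _ => mul_le_mul_of_nonneg_left (hdom2 r) (hu r).le
          · exact ⟨r, Finset.mem_univ r,
              mul_lt_mul_of_pos_left (lt_of_le_of_ne (hdom2 r) (Ne.symm hr)) (hu r)⟩
        linarith [hvq]
      · obtain ⟨i, hi⟩ := Function.ne_iff.mp h1
        have : ∑ i, v i * q.1 i < ∑ i, v i * p.1 i := by
          apply Finset.sum_lt_sum
          · exact fun i _ => mul_le_mul_of_nonneg_left (hdom1 i) (hv i).le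
          · exact ⟨i, Finset.mem_univ i,
              mul_lt_mul_of_pos_left (lt_of_le_of_ne (hdom1 i) hi) (hv i)⟩
        linarith [huq]
    linarith
end

section
/- Necessity of a strictly positive supporting hyperplane for Pareto efficiency: if (X̂, Ŷ) ∈ T is Pareto-efficient in T, then there exist v ∈ ℝ^m with all components strictly positive, u ∈ ℝ^s with all components strictly positive, and u₀ ∈ ℝ such that −v·X_j + u·Y_j + u₀ ≤ 0 for every j = 1, …, n, and −v·X̂ + u·Ŷ + u₀ = 0. -/
open Finset

section Farkas

open Matrix

private lemma dot_sum {ι κ : Type*} [Fintype ι] [Fintype κ] (f : κ → ι → ℝ) (w : ι → ℝ) :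
    (∑ k, f k) ⬝ᵥ w = ∑ k, f k ⬝ᵥ w := by
  simp [dotProduct, Finset.sum_apply, Finset.sum_mul]
  exact Finset.sum_comm

private lemma farkas_fin {ι : Type*} [Fintype ι] :
    ∀ (N : ℕ) (a : Fin N → ι → ℝ) (b : ι → ℝ),
      (∃ c : Fin N → ℝ, (∀ i, 0 ≤ c i) ∧ b = ∑ i, c i • a i) ∨
      (∃ w : ι → ℝ, (∀ i, a i ⬝ᵥ w ≤ 0) ∧ 0 < b ⬝ᵥ w) := by
  intro N
  induction N with
  | zero =>
    intro a b
    by_cases hb : b = 0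
    · exact Or.inl ⟨0, fun i => le_rfl, by simp [hb]⟩
    · refine Or.inr ⟨b, fun i => i.elim0, ?_⟩
      have h1 : 0 ≤ b ⬝ᵥ b := Finset.sum_nonneg fun i _ => mul_self_nonneg _
      have h2 : b ⬝ᵥ b ≠ 0 := fun h => hb (dotProduct_self_eq_zero.mp h)
      exact lt_of_le_of_ne h1 (Ne.symm h2)
  | succ N ih =>
    intro a b
    rcases ih (fun i => a i.succ) b with ⟨c, hc, hbc⟩ | ⟨w, hw, hbw⟩
    · refine Or.inl ⟨Fin.cases 0 c, fun i => Fin.cases le_rfl hc i, ?_⟩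
      rw [Fin.sum_univ_succ]
      simp only [Fin.cases_zero, Fin.cases_succ, zero_smul, zero_add]
      exact hbc
    · by_cases ha0 : a 0 ⬝ᵥ w ≤ 0
      · exact Or.inr ⟨w, fun i => Fin.cases ha0 hw i, hbw⟩
      · push_neg at ha0
        have hd : (a 0 ⬝ᵥ w) ≠ 0 := ne_of_gt ha0
        set φ : (ι → ℝ) → (ι → ℝ) := fun x => x - ((x ⬝ᵥ w) / (a 0 ⬝ᵥ w)) • a 0 with hφ
        rcases ih (fun i => φ (a i.succ)) (φ b) with ⟨c, hc, hfb⟩ | ⟨u, hu, hbu⟩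
        · -- reconstruct a conic combination for b
          set x : ι → ℝ := ∑ i, c i • a i.succ with hx
          have hxd : x ⬝ᵥ w = ∑ i, c i * (a i.succ ⬝ᵥ w) := by
            rw [hx, dot_sum]
            exact Finset.sum_congr rfl fun i _ => by
              rw [smul_dotProduct]; simp [smul_eq_mul]
          have hsum : ∑ i, c i • φ (a i.succ) = φ x := by
            simp only [hφ, smul_sub, Finset.sum_sub_distrib]
            rw [← hx, hxd]
            congr 1
            have hterm : ∀ i : Fin N, c i • (a i.succ ⬝ᵥ w / (a 0 ⬝ᵥ w)) • a 0
                = (c i * (a i.succ ⬝ᵥ w) / (a 0 ⬝ᵥ w)) • a 0 := fun i => by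
              rw [smul_smul, mul_div_assoc]
            simp only [hterm]
            rw [← Finset.sum_smul, Finset.sum_div]
          have hxw : x ⬝ᵥ w ≤ 0 := by
            rw [hxd]
            exact Finset.sum_nonpos fun i _ =>
              mul_nonpos_of_nonneg_of_nonpos (hc i) (hw i)
          have ht : 0 ≤ (b ⬝ᵥ w - x ⬝ᵥ w) / (a 0 ⬝ᵥ w) :=
            div_nonneg (by linarith) (le_of_lt ha0)
          have h0 : φ b = φ x := by rw [hfb, hsum]
          have hb' : b = ((b ⬝ᵥ w - x ⬝ᵥ w) / (a 0 ⬝ᵥ w)) • a 0 + x := by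
            funext l
            have h1l := congrFun h0 l
            simp only [hφ, Pi.sub_apply, Pi.smul_apply, smul_eq_mul] at h1l
            simp only [Pi.add_apply, Pi.smul_apply, smul_eq_mul]
            have hd' : a 0 ⬝ᵥ w ≠ 0 := hd
            field_simp at h1l ⊢
            linarith
          refine Or.inl ⟨Fin.cases ((b ⬝ᵥ w - x ⬝ᵥ w) / (a 0 ⬝ᵥ w)) c,
            fun i => Fin.cases ht hc i, ?_⟩
          rw [Fin.sum_univ_succ]
          simp only [Fin.cases_zero, Fin.cases_succ]
          rw [← hx, ← hb']
        · -- adjust the separating functional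
          set w' : ι → ℝ := u - ((a 0 ⬝ᵥ u) / (a 0 ⬝ᵥ w)) • w with hw'
          have key : ∀ x : ι → ℝ, x ⬝ᵥ w' = φ x ⬝ᵥ u := by
            intro x
            simp only [hw', hφ, dotProduct_sub, sub_dotProduct, dotProduct_smul,
              smul_dotProduct, smul_eq_mul]
            ring
          have ha0w' : a 0 ⬝ᵥ w' = 0 := by
            simp only [hw', dotProduct_sub, dotProduct_smul, smul_eq_mul]
            field_simp
            ring
          refine Or.inr ⟨w', fun i => ?_, ?_⟩
          · refine Fin.cases (le_of_eq ha0w') (fun j => ?_) i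
            rw [key]
            exact hu j
          · rw [key]
            exact hbu

private lemma farkas {ι κ : Type*} [Fintype ι] [Fintype κ] (a : κ → ι → ℝ) (b : ι → ℝ) :
    (∃ c : κ → ℝ, (∀ k, 0 ≤ c k) ∧ b = ∑ k, c k • a k) ∨
    (∃ w : ι → ℝ, (∀ k, a k ⬝ᵥ w ≤ 0) ∧ 0 < b ⬝ᵥ w) := by
  obtain e := Fintype.equivFin κ
  rcases farkas_fin (Fintype.card κ) (fun i => a (e.symm i)) b with ⟨c, hc, hb⟩ | ⟨w, hw, hbw⟩
  · refine Or.inl ⟨fun k => c (e k), fun k => hc _, ?_⟩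
    rw [hb]
    exact (Fintype.sum_equiv e _ _ (fun k => by simp)).symm
  · exact Or.inr ⟨w, fun k => by simpa using hw (e k), hbw⟩

end Farkas

open Matrix in
/-- Necessity of a strictly positive supporting hyperplane for Pareto efficiency. -/
theorem vrs_supporting_hyperplane_necessary (m s n : ℕ)
    (X : Fin n → Fin m → ℝ) (Y : Fin n → Fin s → ℝ)
    (hX : ∀ j i, 0 ≤ X j i) (hXne : ∀ j, X j ≠ 0)
    (hY : ∀ j r, 0 ≤ Y j r) (hYne : ∀ j, Y j ≠ 0)
    (p : (Fin m → ℝ) × (Fin s → ℝ)) (hp : ParetoEff (VRS X Y) p) :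
    ∃ (v : Fin m → ℝ) (u : Fin s → ℝ) (u₀ : ℝ),
      (∀ i, 0 < v i) ∧ (∀ r, 0 < u r) ∧
      (∀ j, -(∑ i, v i * X j i) + (∑ r, u r * Y j r) + u₀ ≤ 0) ∧
      -(∑ i, v i * p.1 i) + (∑ r, u r * p.2 r) + u₀ = 0 := by
  classical
  set z : Fin n → (Fin m ⊕ Fin s) → ℝ :=
    fun j => Sum.elim (fun i => p.1 i - X j i) (fun r => Y j r - p.2 r) with hz
  -- coordinatewise values of convex combinations of the `z j`
  have key1 : ∀ (μ : Fin n → ℝ), ∑ j, μ j = 1 →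
      ∀ i, ∑ j, μ j * z j (Sum.inl i) = p.1 i - ∑ j, μ j * X j i := by
    intro μ hμ i
    simp only [hz, Sum.elim_inl, mul_sub]
    rw [Finset.sum_sub_distrib, ← Finset.sum_mul, hμ, one_mul]
  have key2 : ∀ (μ : Fin n → ℝ), ∑ j, μ j = 1 →
      ∀ r, ∑ j, μ j * z j (Sum.inr r) = (∑ j, μ j * Y j r) - p.2 r := by
    intro μ hμ r
    simp only [hz, Sum.elim_inr, mul_sub]
    rw [Finset.sum_sub_distrib, ← Finset.sum_mul, hμ, one_mul]
  -- the key consequence of Pareto efficiency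
  have H : ∀ μ : Fin n → ℝ, (∀ j, 0 ≤ μ j) → ∑ j, μ j = 1 →
      (∀ l, 0 ≤ ∑ j, μ j * z j l) → ∀ l, ∑ j, μ j * z j l = 0 := by
    intro μ hμ0 hμ1 hge
    set q : (Fin m → ℝ) × (Fin s → ℝ) :=
      (fun i => ∑ j, μ j * X j i, fun r => ∑ j, μ j * Y j r) with hq
    have hq1 : ∀ i, q.1 i = ∑ j, μ j * X j i := fun i => by rw [hq]
    have hq2 : ∀ r, q.2 r = ∑ j, μ j * Y j r := fun r => by rw [hq]
    have hqT : q ∈ VRS X Y := by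
      refine ⟨fun r => ?_, μ, hμ0, hμ1, fun i => le_of_eq (hq1 i).symm,
        fun r => le_of_eq (hq2 r)⟩
      rw [hq2 r]
      exact Finset.sum_nonneg fun j _ => mul_nonneg (hμ0 j) (hY j r)
    have hdom : Dominates q p := by
      constructor
      · intro i
        have h := hge (Sum.inl i)
        rw [key1 μ hμ1 i] at h
        rw [hq1 i]
        linarith
      · intro r
        have h := hge (Sum.inr r)
        rw [key2 μ hμ1 r] at h
        rw [hq2 r]
        linarith
    have hqp : q = p := by
      by_contra hne
      exact hp.2 ⟨q, hqT, hdom, hne⟩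
    intro l
    rcases l with i | r
    · rw [key1 μ hμ1 i]
      have h1 : q.1 i = p.1 i := by rw [hqp]
      rw [hq1 i] at h1
      linarith
    · rw [key2 μ hμ1 r]
      have h2 : q.2 r = p.2 r := by rw [hqp]
      rw [hq2 r] at h2
      linarith
  -- for every coordinate, a nonnegative supporting functional positive there
  have claim : ∀ k : Fin m ⊕ Fin s, ∃ w : (Fin m ⊕ Fin s) → ℝ,
      (∀ l, 0 ≤ w l) ∧ 0 < w k ∧ ∀ j, z j ⬝ᵥ w ≤ 0 := by
    intro k
    rcases farkas (Sum.elim z (fun l : Fin m ⊕ Fin s => -(Pi.single l (1:ℝ))))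
        (Pi.single k (1:ℝ)) with ⟨c, hc, hb⟩ | ⟨w, hw, hbw⟩
    · exfalso
      have hyl : ∀ l : Fin m ⊕ Fin s, ∑ j, c (Sum.inl j) * z j l
          = (Pi.single k 1 : (Fin m ⊕ Fin s) → ℝ) l + c (Sum.inr l) := by
        intro l
        have h := congrFun hb l
        rw [Fintype.sum_sum_type] at h
        simp only [Finset.sum_apply, Pi.add_apply, Pi.smul_apply, Pi.neg_apply,
          smul_eq_mul, Sum.elim_inl, Sum.elim_inr, mul_neg] at h
        have hsingle : ∑ l' : Fin m ⊕ Fin s, c (Sum.inr l') * (Pi.single l' 1 :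
            (Fin m ⊕ Fin s) → ℝ) l = c (Sum.inr l) := by
          simp [Pi.single_apply, mul_ite]
        rw [Finset.sum_neg_distrib, hsingle] at h
        linarith
      have hk1 : (1:ℝ) ≤ ∑ j, c (Sum.inl j) * z j k := by
        rw [hyl k, Pi.single_eq_same]
        linarith [hc (Sum.inr k)]
      by_cases hS : ∑ j, c (Sum.inl j) = 0
      · have hall : ∀ j ∈ Finset.univ, c (Sum.inl j) = 0 :=
          (Finset.sum_eq_zero_iff_of_nonneg fun j _ => hc (Sum.inl j)).mp hS
        have hz0 : ∑ j, c (Sum.inl j) * z j k = 0 :=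
          Finset.sum_eq_zero fun j hj => by rw [hall j hj, zero_mul]
        linarith
      · have hSpos : 0 < ∑ j, c (Sum.inl j) :=
          lt_of_le_of_ne (Finset.sum_nonneg fun j _ => hc (Sum.inl j)) (Ne.symm hS)
        have hμ1 : ∑ j, c (Sum.inl j) / (∑ j', c (Sum.inl j')) = 1 := by
          rw [← Finset.sum_div, div_self (ne_of_gt hSpos)]
        have hμz : ∀ l, ∑ j, (c (Sum.inl j) / (∑ j', c (Sum.inl j'))) * z j l
            = (∑ j, c (Sum.inl j) * z j l) / (∑ j', c (Sum.inl j')) := by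
          intro l
          rw [Finset.sum_div]
          exact Finset.sum_congr rfl fun j _ => by ring
        have hge : ∀ l, 0 ≤ ∑ j, (c (Sum.inl j) / (∑ j', c (Sum.inl j'))) * z j l := by
          intro l
          rw [hμz l]
          refine div_nonneg ?_ (le_of_lt hSpos)
          rw [hyl l]
          have hsl : (0:ℝ) ≤ (Pi.single k 1 : (Fin m ⊕ Fin s) → ℝ) l := by
            rcases eq_or_ne l k with hlk | hlk
            · rw [hlk, Pi.single_eq_same]; norm_num
            · rw [Pi.single_eq_of_ne hlk]
          linarith [hc (Sum.inr l)]
        have h0 := H _ (fun j => div_nonneg (hc (Sum.inl j)) (le_of_lt hSpos)) hμ1 hge k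
        rw [hμz k] at h0
        have hzero : ∑ j, c (Sum.inl j) * z j k = 0 :=
          (div_eq_zero_iff.mp h0).resolve_right (ne_of_gt hSpos)
        linarith
    · refine ⟨w, fun l => ?_, ?_, fun j => ?_⟩
      · have h := hw (Sum.inr l)
        simp only [Sum.elim_inr, neg_dotProduct, single_dotProduct, one_mul,
          neg_nonpos] at h
        exact h
      · have h := hbw
        rwa [single_dotProduct, one_mul] at h
      · exact hw (Sum.inl j)
  choose W hW0 hWpos hWz using claim
  set w : (Fin m ⊕ Fin s) → ℝ := ∑ k, W k with hwdef
  have hwl : ∀ l, w l = ∑ k, W k l := by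
    intro l
    rw [hwdef]
    simp [Finset.sum_apply]
  have hwpos : ∀ l, 0 < w l := by
    intro l
    rw [hwl l]
    exact Finset.sum_pos' (fun k _ => hW0 k l) ⟨l, Finset.mem_univ l, hWpos l⟩
  have hwz : ∀ j, z j ⬝ᵥ w ≤ 0 := by
    intro j
    have hsplit : z j ⬝ᵥ w = ∑ k, z j ⬝ᵥ W k := by
      rw [hwdef, dotProduct_comm, dot_sum]
      exact Finset.sum_congr rfl fun k _ => dotProduct_comm _ _
    rw [hsplit]
    exact Finset.sum_nonpos fun k _ => hWz k j
  refine ⟨fun i => w (Sum.inl i), fun r => w (Sum.inr r),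
    (∑ i, w (Sum.inl i) * p.1 i) - ∑ r, w (Sum.inr r) * p.2 r,
    fun i => hwpos _, fun r => hwpos _, ?_, by ring⟩
  intro j
  have hdot : z j ⬝ᵥ w = (∑ i, (p.1 i - X j i) * w (Sum.inl i))
      + ∑ r, (Y j r - p.2 r) * w (Sum.inr r) := by
    simp [dotProduct, Fintype.sum_sum_type, hz]
  have hle := hwz j
  rw [hdot] at hle
  have e1 : ∑ i, (p.1 i - X j i) * w (Sum.inl i)
      = (∑ i, w (Sum.inl i) * p.1 i) - ∑ i, w (Sum.inl i) * X j i := by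
    rw [← Finset.sum_sub_distrib]
    exact Finset.sum_congr rfl fun i _ => by ring
  have e2 : ∑ r, (Y j r - p.2 r) * w (Sum.inr r)
      = (∑ r, w (Sum.inr r) * Y j r) - ∑ r, w (Sum.inr r) * p.2 r := by
    rw [← Finset.sum_sub_distrib]
    exact Finset.sum_congr rfl fun r _ => by ring
  rw [e1, e2] at hle
  linarith
end

section
/- Existence of efficient dominating targets: for every (X₀, Y₀) ∈ T, there exists a point (X̂, Ŷ) ∈ T that is Pareto-efficient in T and dominates (X₀, Y₀), i.e., X̂ ≤ X₀ and Ŷ ≥ Y₀ componentwise. -/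
open Finset

/-- Existence of efficient dominating targets: every point of T is dominated by some
Pareto-efficient point of T. -/
theorem vrs_exists_efficient_dominating (m s n : ℕ)
    (X : Fin n → Fin m → ℝ) (Y : Fin n → Fin s → ℝ)
    (hX : ∀ j i, 0 ≤ X j i) (hXne : ∀ j, X j ≠ 0)
    (hY : ∀ j r, 0 ≤ Y j r) (hYne : ∀ j, Y j ≠ 0)
    (p₀ : (Fin m → ℝ) × (Fin s → ℝ)) (hp₀ : p₀ ∈ VRS X Y) :
    ∃ q : (Fin m → ℝ) × (Fin s → ℝ), ParetoEff (VRS X Y) q ∧ Dominates q p₀ := by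
  obtain ⟨hp₀pos, lam₀, hl₀nn, hl₀sum, hl₀X, hl₀Y⟩ := hp₀
  set P := (((Fin m → ℝ) × (Fin s → ℝ)) × (Fin n → ℝ)) with hP
  set K : Set (((Fin m → ℝ) × (Fin s → ℝ)) × (Fin n → ℝ)) := {x | (∀ j, 0 ≤ x.2 j) ∧ (∑ j, x.2 j = 1) ∧
    (∀ i, ∑ j, x.2 j * X j i ≤ x.1.1 i) ∧ (∀ i, x.1.1 i ≤ p₀.1 i) ∧
    (∀ r, p₀.2 r ≤ x.1.2 r) ∧ (∀ r, x.1.2 r ≤ ∑ j, x.2 j * Y j r)} with hKdef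
  have hKclosed : IsClosed K := by
    rw [hKdef]
    simp only [Set.setOf_and]
    refine (IsClosed.inter ?_ (IsClosed.inter ?_ (IsClosed.inter ?_
      (IsClosed.inter ?_ (IsClosed.inter ?_ ?_)))))
    · rw [Set.setOf_forall]
      exact isClosed_iInter fun j => isClosed_le continuous_const (by fun_prop)
    · exact isClosed_eq (by fun_prop) continuous_const
    · rw [Set.setOf_forall]
      exact isClosed_iInter fun i => isClosed_le (by fun_prop) (by fun_prop)
    · rw [Set.setOf_forall]
      exact isClosed_iInter fun i => isClosed_le (by fun_prop) continuous_const
    · rw [Set.setOf_forall]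
      exact isClosed_iInter fun r => isClosed_le continuous_const (by fun_prop)
    · rw [Set.setOf_forall]
      exact isClosed_iInter fun r => isClosed_le (by fun_prop) (by fun_prop)
  have hKsub : K ⊆ Set.Icc (((0 : Fin m → ℝ), (0 : Fin s → ℝ)), (0 : Fin n → ℝ))
      (((p₀.1, fun r => ∑ j, Y j r), (1 : Fin n → ℝ))) := by
    rintro ⟨⟨u, v⟩, lam⟩ ⟨h1, h2, h3, h4, h5, h6⟩
    constructor
    · refine ⟨⟨fun i => ?_, fun r => ?_⟩, fun j => h1 j⟩
      · exact le_trans (Finset.sum_nonneg fun j _ => mul_nonneg (h1 j) (hX j i)) (h3 i)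
      · exact le_trans (hp₀pos r) (h5 r)
    · refine ⟨⟨fun i => h4 i, fun r => ?_⟩, fun j => ?_⟩
      · exact le_trans (h6 r) (Finset.sum_le_sum fun j _ => by
          nlinarith [hY j r, h1 j, Finset.single_le_sum (fun k (_ : k ∈ Finset.univ) => h1 k)
            (Finset.mem_univ j), h2])
      · calc lam j ≤ ∑ k, lam k :=
            Finset.single_le_sum (fun k _ => h1 k) (Finset.mem_univ j)
          _ = 1 := h2
  have hKcompact : IsCompact K := (isCompact_Icc).of_isClosed_subset hKclosed hKsub
  set D : Set ((Fin m → ℝ) × (Fin s → ℝ)) := Prod.fst '' K with hDdef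
  have hDcompact : IsCompact D := hKcompact.image continuous_fst
  have hDmem : ∀ q, q ∈ D ↔ (q ∈ VRS X Y ∧ Dominates q p₀) := by
    intro q
    constructor
    · rintro ⟨⟨q', lam⟩, ⟨h1, h2, h3, h4, h5, h6⟩, rfl⟩
      exact ⟨⟨fun r => le_trans (hp₀pos r) (h5 r), lam, h1, h2, h3, h6⟩, ⟨h4, h5⟩⟩
    · rintro ⟨⟨hq2, lam, h1, h2, h3, h6⟩, ⟨h4, h5⟩⟩
      exact ⟨(q, lam), ⟨h1, h2, h3, h4, h5, h6⟩, rfl⟩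
  have hDne : D.Nonempty := ⟨p₀, (hDmem p₀).mpr
    ⟨⟨hp₀pos, lam₀, hl₀nn, hl₀sum, hl₀X, hl₀Y⟩, ⟨fun i => le_rfl, fun r => le_rfl⟩⟩⟩
  have hf : Continuous fun q : (Fin m → ℝ) × (Fin s → ℝ) => (∑ r, q.2 r) - ∑ i, q.1 i := by
    fun_prop
  obtain ⟨q, hqD, hqmax⟩ := hDcompact.exists_isMaxOn hDne hf.continuousOn
  obtain ⟨hqT, hqdom⟩ := (hDmem q).mp hqD
  refine ⟨q, ⟨hqT, ?_⟩, hqdom⟩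
  rintro ⟨q', hq'T, ⟨hd1, hd2⟩, hne⟩
  have hq'D : q' ∈ D := (hDmem q').mpr ⟨hq'T,
    ⟨fun i => le_trans (hd1 i) (hqdom.1 i), fun r => le_trans (hqdom.2 r) (hd2 r)⟩⟩
  have hmax := hqmax hq'D
  simp only [Set.mem_setOf_eq] at hmax
  have hs1 : ∑ i, q'.1 i ≤ ∑ i, q.1 i := Finset.sum_le_sum fun i _ => hd1 i
  have hs2 : ∑ r, q.2 r ≤ ∑ r, q'.2 r := Finset.sum_le_sum fun r _ => hd2 r
  have he1 : ∑ i, q'.1 i = ∑ i, q.1 i := by linarith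
  have he2 : ∑ r, q.2 r = ∑ r, q'.2 r := by linarith
  have hq1 : ∀ i ∈ Finset.univ, q'.1 i = q.1 i :=
    (Finset.sum_eq_sum_iff_of_le fun i _ => hd1 i).mp he1
  have hq2 : ∀ r ∈ Finset.univ, q.2 r = q'.2 r :=
    (Finset.sum_eq_sum_iff_of_le fun r _ => hd2 r).mp he2
  exact hne (Prod.ext (funext fun i => hq1 i (Finset.mem_univ i))
    (funext fun r => (hq2 r (Finset.mem_univ r)).symm))
end

section
/- The Pareto-efficient frontier ∂(T), i.e., the set of Pareto-efficient points of T, is a closed subset of ℝ^m × ℝ^s. -/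
open Finset

section Aux

variable {m s n : ℕ} (X : Fin n → Fin m → ℝ) (Y : Fin n → Fin s → ℝ)

/-- Map from weights to the corresponding production point. -/
noncomputable def vrsMap (lam : Fin n → ℝ) : (Fin m → ℝ) × (Fin s → ℝ) :=
  (fun i => ∑ j, lam j * X j i, fun r => ∑ j, lam j * Y j r)

lemma continuous_vrsMap : Continuous (vrsMap X Y) := by
  refine Continuous.prodMk ?_ ?_ <;>
  · apply continuous_pi; intro i
    exact continuous_finset_sum _ fun j _ => (continuous_apply j).mul continuous_const

/-- Sub-simplex of weights supported in `S`. -/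
def vrsSimp (S : Finset (Fin n)) : Set (Fin n → ℝ) :=
  {lam | (∀ j, 0 ≤ lam j) ∧ ∑ j, lam j = 1 ∧ ∀ j ∉ S, lam j = 0}

lemma isCompact_vrsSimp (S : Finset (Fin n)) : IsCompact (vrsSimp (n := n) S) := by
  have hsub : vrsSimp (n := n) S ⊆ stdSimplex ℝ (Fin n) := fun lam h => ⟨h.1, h.2.1⟩
  refine IsCompact.of_isClosed_subset (isCompact_stdSimplex ℝ (Fin n)) ?_ hsub
  have h1 : IsClosed {lam : Fin n → ℝ | ∀ j, 0 ≤ lam j} := by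
    simp only [Set.setOf_forall]
    exact isClosed_iInter fun j => isClosed_le continuous_const (continuous_apply j)
  have h2 : IsClosed {lam : Fin n → ℝ | ∑ j, lam j = 1} :=
    isClosed_eq (continuous_finset_sum _ fun j _ => continuous_apply j) continuous_const
  have h3 : IsClosed {lam : Fin n → ℝ | ∀ j ∉ S, lam j = 0} := by
    simp only [Set.setOf_forall]
    exact isClosed_iInter fun j => isClosed_iInter fun _ =>
      isClosed_eq (continuous_apply j) continuous_const
  have : vrsSimp (n := n) S =
      ({lam : Fin n → ℝ | ∀ j, 0 ≤ lam j} ∩ {lam | ∑ j, lam j = 1}) ∩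
        {lam | ∀ j ∉ S, lam j = 0} := by
    ext lam; simp [vrsSimp, and_assoc]
  rw [this]
  exact ((h1.inter h2).inter h3)

lemma vrsMap_mem (hY : ∀ j r, 0 ≤ Y j r) {lam : Fin n → ℝ}
    (h0 : ∀ j, 0 ≤ lam j) (h1 : ∑ j, lam j = 1) : vrsMap X Y lam ∈ VRS X Y := by
  refine ⟨?_, lam, h0, h1, fun _ => le_refl _, fun _ => le_refl _⟩
  intro r
  show (0:ℝ) ≤ ∑ j, lam j * Y j r
  exact Finset.sum_nonneg fun j _ => mul_nonneg (h0 j) (hY j r)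

/-- An efficient point is a convex combination of the DMUs. -/
lemma eff_rep (hY : ∀ j r, 0 ≤ Y j r) {p : (Fin m → ℝ) × (Fin s → ℝ)}
    (hp : ParetoEff (VRS X Y) p) :
    ∃ lam : Fin n → ℝ, (∀ j, 0 ≤ lam j) ∧ ∑ j, lam j = 1 ∧ vrsMap X Y lam = p := by
  obtain ⟨⟨hp2, lam, h0, h1, hx, hy⟩, hne⟩ := hp
  refine ⟨lam, h0, h1, ?_⟩
  by_contra hne'
  exact hne ⟨vrsMap X Y lam, vrsMap_mem X Y hY h0 h1, ⟨hx, hy⟩, hne'⟩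

/-- If `vrsMap lam` is efficient, any convex combination supported inside the
support of `lam` is also efficient. -/
lemma key (hY : ∀ j r, 0 ≤ Y j r) {lam : Fin n → ℝ}
    (h0 : ∀ j, 0 ≤ lam j) (h1 : ∑ j, lam j = 1)
    (heff : ParetoEff (VRS X Y) (vrsMap X Y lam)) {mu : Fin n → ℝ}
    (hm0 : ∀ j, 0 ≤ mu j) (hm1 : ∑ j, mu j = 1)
    (hsupp : ∀ j, lam j = 0 → mu j = 0) :
    ParetoEff (VRS X Y) (vrsMap X Y mu) := by
  classical
  refine ⟨vrsMap_mem X Y hY hm0 hm1, ?_⟩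
  rintro ⟨r, ⟨hr2, nu, hn0, hn1, hnx, hny⟩, ⟨hd1, hd2⟩, hrne⟩
  set q' := vrsMap X Y mu with hq'
  set r' := vrsMap X Y nu with hr'
  -- r' dominates q'
  have hA : ∀ i, r'.1 i ≤ q'.1 i := fun i => le_trans (hnx i) (hd1 i)
  have hB : ∀ t, q'.2 t ≤ r'.2 t := fun t => le_trans (hd2 t) (hny t)
  have hr'ne : r' ≠ q' := by
    intro h
    apply hrne
    have hx : ∀ i, r.1 i = q'.1 i := fun i =>
      le_antisymm (hd1 i) (by rw [← h]; exact hnx i)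
    have hy : ∀ t, r.2 t = q'.2 t := fun t =>
      le_antisymm (by rw [← h]; exact hny t) (hd2 t)
    exact Prod.ext (funext hx) (funext hy)
  -- the support of lam
  set S : Finset (Fin n) := Finset.univ.filter (fun j => lam j ≠ 0) with hS
  have hSne : S.Nonempty := by
    by_contra h
    have : ∀ j, lam j = 0 := by
      intro j
      by_contra hj
      exact h ⟨j, by simp [hS, hj]⟩
    simp [this] at h1
  set ε : ℝ := S.inf' hSne lam with hε
  have hεpos : 0 < ε := by
    rw [hε, Finset.lt_inf'_iff]
    intro j hj
    have : lam j ≠ 0 := by simpa [hS] using hj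
    exact lt_of_le_of_ne (h0 j) (Ne.symm this)
  have hεle : ∀ j, lam j ≠ 0 → ε ≤ lam j := by
    intro j hj
    exact Finset.inf'_le _ (by simp [hS, hj])
  have hmu_le_one : ∀ j, mu j ≤ 1 := by
    intro j
    rw [← hm1]
    exact Finset.single_le_sum (fun k _ => hm0 k) (Finset.mem_univ j)
  set η : Fin n → ℝ := fun j => lam j + ε * (nu j - mu j) with hη
  have hη0 : ∀ j, 0 ≤ η j := by
    intro j
    by_cases hj : lam j = 0
    · have := hsupp j hj
      simp only [hη, hj, this, sub_zero, zero_add]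
      exact mul_nonneg hεpos.le (hn0 j)
    · have h₁ : ε * mu j ≤ lam j := by
        calc ε * mu j ≤ ε * 1 := by
              exact mul_le_mul_of_nonneg_left (hmu_le_one j) hεpos.le
          _ = ε := mul_one ε
          _ ≤ lam j := hεle j hj
      have : 0 ≤ lam j - ε * mu j := by linarith
      have h₂ : 0 ≤ ε * nu j := mul_nonneg hεpos.le (hn0 j)
      simp only [hη]
      nlinarith
  have hη1 : ∑ j, η j = 1 := by
    simp only [hη]
    rw [Finset.sum_add_distrib, ← Finset.mul_sum, Finset.sum_sub_distrib, h1, hn1, hm1]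
    ring
  -- linearity of vrsMap
  have hlin1 : ∀ i, (vrsMap X Y η).1 i =
      (vrsMap X Y lam).1 i + ε * (r'.1 i - q'.1 i) := by
    intro i
    show ∑ j, η j * X j i = (∑ j, lam j * X j i) +
      ε * ((∑ j, nu j * X j i) - ∑ j, mu j * X j i)
    simp only [hη, add_mul, sub_mul, mul_sub, mul_assoc, Finset.sum_add_distrib,
      Finset.sum_sub_distrib, Finset.mul_sum]
  have hlin2 : ∀ t, (vrsMap X Y η).2 t =
      (vrsMap X Y lam).2 t + ε * (r'.2 t - q'.2 t) := by
    intro t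
    show ∑ j, η j * Y j t = (∑ j, lam j * Y j t) +
      ε * ((∑ j, nu j * Y j t) - ∑ j, mu j * Y j t)
    simp only [hη, add_mul, sub_mul, mul_sub, mul_assoc, Finset.sum_add_distrib,
      Finset.sum_sub_distrib, Finset.mul_sum]
  -- vrsMap η dominates vrsMap lam and differs from it: contradiction
  apply heff.2
  refine ⟨vrsMap X Y η, vrsMap_mem X Y hY hη0 hη1, ⟨?_, ?_⟩, ?_⟩
  · intro i
    rw [hlin1 i]
    have := hA i
    nlinarith [hεpos]
  · intro t
    rw [hlin2 t]
    have := hB t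
    nlinarith [hεpos]
  · intro hcontr
    apply hr'ne
    have h1' : ∀ i, r'.1 i = q'.1 i := by
      intro i
      have := hlin1 i
      rw [hcontr] at this
      have : ε * (r'.1 i - q'.1 i) = 0 := by linarith
      have := (mul_eq_zero.1 this).resolve_left (ne_of_gt hεpos)
      linarith
    have h2' : ∀ t, r'.2 t = q'.2 t := by
      intro t
      have := hlin2 t
      rw [hcontr] at this
      have : ε * (r'.2 t - q'.2 t) = 0 := by linarith
      have := (mul_eq_zero.1 this).resolve_left (ne_of_gt hεpos)
      linarith
    exact Prod.ext (funext h1') (funext h2')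

end Aux

/-- The Pareto-efficient frontier of T is a closed set. -/
theorem vrs_pareto_frontier_closed (m s n : ℕ)
    (X : Fin n → Fin m → ℝ) (Y : Fin n → Fin s → ℝ)
    (hX : ∀ j i, 0 ≤ X j i) (hXne : ∀ j, X j ≠ 0)
    (hY : ∀ j r, 0 ≤ Y j r) (hYne : ∀ j, Y j ≠ 0) :
    IsClosed {p : (Fin m → ℝ) × (Fin s → ℝ) | ParetoEff (VRS X Y) p} := by
  classical
  set E := {p : (Fin m → ℝ) × (Fin s → ℝ) | ParetoEff (VRS X Y) p} with hE
  have hEq : E = ⋃ S ∈ Finset.univ.filter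
      (fun S : Finset (Fin n) => vrsMap X Y '' vrsSimp S ⊆ E),
      vrsMap X Y '' vrsSimp S := by
    ext p
    constructor
    · intro hp
      have hp' : ParetoEff (VRS X Y) p := hp
      obtain ⟨lam, h0, h1, hpl⟩ := eff_rep X Y hY hp'
      set S : Finset (Fin n) := Finset.univ.filter (fun j => lam j ≠ 0) with hS
      have hsub : vrsMap X Y '' vrsSimp S ⊆ E := by
        rintro q ⟨mu, ⟨hm0, hm1, hms⟩, rfl⟩
        refine key X Y hY h0 h1 ?_ hm0 hm1 ?_
        · rw [hpl]; exact hp'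
        · intro j hj
          apply hms
          simp [hS, hj]
      simp only [Set.mem_iUnion]
      refine ⟨S, ?_, lam, ⟨h0, h1, fun j hj => by simpa [hS] using hj⟩, hpl⟩
      simp only [Finset.mem_filter, Finset.mem_univ, true_and]
      exact hsub
    · intro hp
      simp only [Set.mem_iUnion] at hp
      obtain ⟨S, hSmem, hpS⟩ := hp
      have : vrsMap X Y '' vrsSimp S ⊆ E := by
        simpa using (Finset.mem_filter.1 hSmem).2
      exact this hpS
  rw [hEq]
  apply Set.Finite.isClosed_biUnion (Finset.finite_toSet _)
  intro S _
  exact ((isCompact_vrsSimp S).image (continuous_vrsMap X Y)).isClosed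
end
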